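/- arXiv:1609.07274 — 3 statements merged into one kernel-verified Lean document; each statement's English description precedes it below -/
import Mathlib

section
/- Let R₁, …, R_t be finite non-commutative rings with Z(R_i) = {0} for each i. Then the domination number of the commuting graph of the direct product satisfies γ(Γ(R₁ × ⋯ × R_t)) = min over 1 ≤ i ≤ t of γ(Γ(R_i)). -/
open scoped Classical

noncomputable section

/-- The commuting graph of a (non-unital, possibly non-commutative) ring `R`:
vertices are the non-central elements, and two distinct vertices are adjacent
iff they commute. -/
def commutingGraph (R : Type*) [NonUnitalRing R] :
    SimpleGraph {x : R // x ∉ Set.center R} where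
  Adj a b := a ≠ b ∧ (a : R) * b = (b : R) * a
  symm := ⟨by rintro a b ⟨h1, h2⟩; exact ⟨h1.symm, h2.symm⟩⟩
  loopless := ⟨by rintro a ⟨h, -⟩; exact h rfl⟩

/-- A dominating set: every vertex not in `D` is adjacent to some vertex of `D`. -/
def SimpleGraph.IsDominatingSet {V : Type*} (G : SimpleGraph V) (D : Finset V) : Prop :=
  ∀ v, v ∉ D → ∃ u ∈ D, G.Adj u v

/-- The domination number: the minimum cardinality of a dominating set. -/
noncomputable def SimpleGraph.dominationNumber {V : Type*} [Fintype V] (G : SimpleGraph V) : ℕ :=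
  sInf {n | ∃ D : Finset V, G.IsDominatingSet D ∧ D.card = n}

/-- The signed domination number: the minimum total weight of a function
`f : V → {-1, 1}` whose sum over every closed neighbourhood is at least `1`. -/
noncomputable def SimpleGraph.signedDominationNumber {V : Type*} [Fintype V]
    (G : SimpleGraph V) : ℤ :=
  sInf {w : ℤ | ∃ f : V → ℤ, (∀ v, f v = 1 ∨ f v = -1) ∧
    (∀ v : V, 1 ≤ ∑ u ∈ Finset.univ.filter (fun u => G.Adj v u ∨ u = v), f u) ∧
    w = ∑ v, f v}

/-- Underlying type of the ring `E`. -/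
def Ering : Type := ZMod 2 × ZMod 2

instance : Fintype Ering := inferInstanceAs (Fintype (ZMod 2 × ZMod 2))
instance : DecidableEq Ering := inferInstanceAs (DecidableEq (ZMod 2 × ZMod 2))
instance : AddCommGroup Ering := inferInstanceAs (AddCommGroup (ZMod 2 × ZMod 2))
instance : Mul Ering := ⟨fun a b => (b.1 * a.1, b.1 * a.2)⟩

/-- `E = ⟨x,y : 2x=2y=0, x²=x, y²=y, xy=x, yx=y⟩`, realized on `ZMod 2 × ZMod 2`
with `x = (1,0)`, `y = (1,1)` and multiplication `a * b = (b₁a₁, b₁a₂)`. -/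
instance : NonUnitalRing Ering :=
  { (inferInstanceAs (AddCommGroup Ering) : AddCommGroup Ering), (inferInstanceAs (Mul Ering) : Mul Ering) with
    left_distrib := by decide
    right_distrib := by decide
    zero_mul := by decide
    mul_zero := by decide
    mul_assoc := by decide }

/-- Underlying type of the ring `F`. -/
def Fring : Type := ZMod 2 × ZMod 2

instance : Fintype Fring := inferInstanceAs (Fintype (ZMod 2 × ZMod 2))
instance : DecidableEq Fring := inferInstanceAs (DecidableEq (ZMod 2 × ZMod 2))
instance : AddCommGroup Fring := inferInstanceAs (AddCommGroup (ZMod 2 × ZMod 2))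
instance : Mul Fring := ⟨fun a b => (a.1 * b.1, a.1 * b.2)⟩

/-- `F = ⟨x,y : 2x=2y=0, x²=x, y²=y, xy=y, yx=x⟩`, realized on `ZMod 2 × ZMod 2`
with `x = (1,0)`, `y = (1,1)` and multiplication `a * b = (a₁b₁, a₁b₂)`. -/
instance : NonUnitalRing Fring :=
  { (inferInstanceAs (AddCommGroup Fring) : AddCommGroup Fring), (inferInstanceAs (Mul Fring) : Mul Fring) with
    left_distrib := by decide
    right_distrib := by decide
    zero_mul := by decide
    mul_zero := by decide
    mul_assoc := by decide }

/-! A dominating set of `Γ(R_j)`, embedded into the `j`-th coordinate of the product,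
dominates `Γ(∏ R_i)`: a vertex whose `j`-th coordinate is central commutes with every such
embedded element.

Conversely, if a dominating set `D` of `Γ(∏ R_i)` were smaller than every `γ(Γ(R_i))`, then for
each `i` the `i`-th coordinates of `D` would fail to dominate some vertex `v_i` of `Γ(R_i)`. The
vertex `(v_i)_i` then has a neighbour `u ∈ D`, and each `u_i` commutes with `v_i`; a non-central
`u_i` would be a coordinate of `D` distinct from `v_i`, hence adjacent to it. So every `u_i` is
central, and then so is `u`, which is absurd. -/

namespace SimpleGraph

variable {V : Type*} (G : SimpleGraph V)

lemma exists_isDominatingSet_card_eq_dominationNumber [Fintype V] :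
    ∃ D : Finset V, G.IsDominatingSet D ∧ D.card = G.dominationNumber :=
  Nat.sInf_mem (s := {n | ∃ D : Finset V, G.IsDominatingSet D ∧ D.card = n})
    ⟨_, Finset.univ, fun v hv => absurd (Finset.mem_univ v) hv, rfl⟩

variable {G}

lemma IsDominatingSet.dominationNumber_le_card [Fintype V] {D : Finset V}
    (hD : G.IsDominatingSet D) : G.dominationNumber ≤ D.card :=
  Nat.sInf_le ⟨D, hD, rfl⟩

lemma IsDominatingSet.nonempty [Nonempty V] {D : Finset V} (hD : G.IsDominatingSet D) :
    D.Nonempty := by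
  obtain ⟨v⟩ := ‹Nonempty V›
  by_cases hv : v ∈ D
  · exact ⟨v, hv⟩
  · obtain ⟨u, hu, -⟩ := hD v hv
    exact ⟨u, hu⟩

end SimpleGraph

lemma Set.mem_center_pi_iff {ι : Type*} {A : ι → Type*} [∀ i, Mul (A i)] {x : ∀ i, A i} :
    x ∈ Set.center (∀ i, A i) ↔ ∀ i, x i ∈ Set.center (A i) := by
  rw [Set.center_pi, Set.mem_univ_pi]

lemma Pi.single_mul_eq_mul_single {ι : Type*} [DecidableEq ι] {A : ι → Type*}
    [∀ i, MulZeroClass (A i)] {j : ι} {a : A j} {f : ∀ i, A i} (h : a * f j = f j * a) :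
    Pi.single j a * f = f * Pi.single j a := by
  rw [← Pi.single_mul_left, h, Pi.single_mul_right]

lemma nonempty_notMem_center_of_exists_mul_ne {R : Type*} [NonUnitalRing R]
    (h : ∃ x y : R, x * y ≠ y * x) :
    Nonempty {x : R // x ∉ Set.center R} := by
  obtain ⟨x, y, hxy⟩ := h
  refine ⟨⟨x, fun hx => hxy ?_⟩⟩
  exact ((Semigroup.mem_center_iff.1 hx) y).symm

namespace commutingGraph

variable {ι : Type*} {R : ι → Type*} [∀ i, NonUnitalRing (R i)]

lemma pi_notMem_center {x : ∀ i, R i} (i : ι) (hx : x i ∉ Set.center (R i)) :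
    x ∉ Set.center (∀ i, R i) :=
  fun h => hx (Set.mem_center_pi_iff.1 h i)

lemma single_notMem_center [DecidableEq ι] {j : ι} {a : R j} (ha : a ∉ Set.center (R j)) :
    Pi.single j a ∉ Set.center (∀ i, R i) :=
  pi_notMem_center j (by rwa [Pi.single_eq_same])

def single [DecidableEq ι] (j : ι) :
    {x : R j // x ∉ Set.center (R j)} ↪ {x : ∀ i, R i // x ∉ Set.center (∀ i, R i)} where
  toFun a := ⟨Pi.single j a.1, single_notMem_center a.2⟩
  inj' _ _ h := Subtype.ext (Pi.single_injective j (congrArg Subtype.val h))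

@[simp]
lemma coe_single [DecidableEq ι] (j : ι) (a : {x : R j // x ∉ Set.center (R j)}) :
    (single j a : ∀ i, R i) = Pi.single j a.1 :=
  rfl

lemma isDominatingSet_map_single [DecidableEq ι] {j : ι}
    [Nonempty {x : R j // x ∉ Set.center (R j)}] {D : Finset {x : R j // x ∉ Set.center (R j)}}
    (hD : (commutingGraph (R j)).IsDominatingSet D) :
    (commutingGraph (∀ i, R i)).IsDominatingSet (D.map (single j)) := by
  intro v hv
  have adj_of_mem : ∀ d ∈ D, single j d ≠ v → d.1 * v.1 j = v.1 j * d.1 →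
      ∃ u ∈ D.map (single j), (commutingGraph (∀ i, R i)).Adj u v :=
    fun d hd hne hcomm =>
      ⟨single j d, Finset.mem_map_of_mem _ hd, hne, Pi.single_mul_eq_mul_single hcomm⟩
  have single_ne : ∀ d, d.1 ≠ v.1 j → single j d ≠ v :=
    fun d hne h => hne (by rw [← h, coe_single, Pi.single_eq_same])
  by_cases hvj : v.1 j ∈ Set.center (R j)
  · obtain ⟨d, hd⟩ := hD.nonempty
    exact adj_of_mem d hd (single_ne d fun h => d.2 (h ▸ hvj)) (Semigroup.mem_center_iff.1 hvj d)
  · by_cases hv_mem : ⟨v.1 j, hvj⟩ ∈ D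
    · exact adj_of_mem _ hv_mem (fun h => hv (h ▸ Finset.mem_map_of_mem _ hv_mem)) rfl
    · obtain ⟨d, hd, hne, hcomm⟩ := hD _ hv_mem
      exact adj_of_mem d hd (single_ne d fun h => hne (Subtype.ext h)) hcomm

theorem dominationNumber_pi_le [Fintype ι] [DecidableEq ι] [∀ i, Fintype (R i)] (j : ι)
    (hj : ∃ x y : R j, x * y ≠ y * x) :
    (commutingGraph (∀ i, R i)).dominationNumber ≤ (commutingGraph (R j)).dominationNumber := by
  have := nonempty_notMem_center_of_exists_mul_ne hj
  obtain ⟨D, hD, hcard⟩ :=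
    (commutingGraph (R j)).exists_isDominatingSet_card_eq_dominationNumber
  calc _ ≤ (D.map (single j)).card := (isDominatingSet_map_single hD).dominationNumber_le_card
    _ = _ := by rw [Finset.card_map, hcard]

def proj (i : ι) (D : Finset {x : ∀ i, R i // x ∉ Set.center (∀ i, R i)}) :
    Finset {x : R i // x ∉ Set.center (R i)} :=
  (D.image fun d => d.1 i).subtype (· ∉ Set.center (R i))

variable {i : ι} {D : Finset {x : ∀ i, R i // x ∉ Set.center (∀ i, R i)}}

lemma mem_proj {a : {x : R i // x ∉ Set.center (R i)}} :
    a ∈ proj i D ↔ ∃ d ∈ D, d.1 i = a.1 := by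
  simp [proj]

lemma card_proj_le : (proj i D).card ≤ D.card := by
  rw [proj, Finset.card_subtype]
  exact (Finset.card_filter_le _ _).trans Finset.card_image_le

lemma not_isDominatingSet_of_forall_card_lt [Nonempty ι] [∀ i, Fintype (R i)]
    (hD : ∀ i, D.card < (commutingGraph (R i)).dominationNumber) :
    ¬ (commutingGraph (∀ i, R i)).IsDominatingSet D := by
  intro hdom
  have exists_undominated : ∀ i, ∃ v, v ∉ proj i D ∧
      ∀ u ∈ proj i D, ¬ (commutingGraph (R i)).Adj u v := by
    intro i
    by_contra! h
    exact (hD i).not_ge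
      ((SimpleGraph.IsDominatingSet.dominationNumber_le_card h).trans card_proj_le)
  choose v hv_not_mem hv_not_adj using exists_undominated
  obtain ⟨i₀⟩ := ‹Nonempty ι›
  let w : {x : ∀ i, R i // x ∉ Set.center (∀ i, R i)} :=
    ⟨fun i => v i, pi_notMem_center i₀ (v i₀).2⟩
  have hw : w ∉ D := fun h => hv_not_mem i₀ (mem_proj.2 ⟨w, h, rfl⟩)
  obtain ⟨u, hu, -, hcomm⟩ := hdom w hw
  refine u.2 (Set.mem_center_pi_iff.2 fun i => ?_)
  by_contra hui
  have hmem : ⟨u.1 i, hui⟩ ∈ proj i D := mem_proj.2 ⟨u, hu, rfl⟩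
  exact hv_not_adj i _ hmem ⟨fun h => hv_not_mem i (h ▸ hmem), congrFun hcomm i⟩

theorem exists_dominationNumber_le_pi [Fintype ι] [DecidableEq ι] [Nonempty ι]
    [∀ i, Fintype (R i)] :
    ∃ i, (commutingGraph (R i)).dominationNumber ≤
      (commutingGraph (∀ i, R i)).dominationNumber := by
  obtain ⟨D, hD, hcard⟩ :=
    (commutingGraph (∀ i, R i)).exists_isDominatingSet_card_eq_dominationNumber
  by_contra! h
  exact not_isDominatingSet_of_forall_card_lt (fun i => hcard ▸ h i) hD

end commutingGraph

theorem stmt_4_general (t : ℕ) (ht : 0 < t)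
    (R : Fin t → Type*) [∀ i, NonUnitalRing (R i)] [∀ i, Fintype (R i)]
    (hnc : ∀ i, ∃ x y : R i, x * y ≠ y * x) :
    (commutingGraph (∀ i, R i)).dominationNumber =
      ⨅ i, (commutingGraph (R i)).dominationNumber := by
  have : Nonempty (Fin t) := ⟨⟨0, ht⟩⟩
  obtain ⟨i, hi⟩ := commutingGraph.exists_dominationNumber_le_pi (R := R)
  exact le_antisymm (le_ciInf fun j => commutingGraph.dominationNumber_pi_le j (hnc j))
    ((ciInf_le (OrderBot.bddBelow _) i).trans hi)

/-- Theorem C: the domination number of the commuting graph of a direct product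
is the minimum of the domination numbers of the factors. -/
theorem stmt_4 (t : ℕ) (ht : 0 < t)
    (R : Fin t → Type*) [∀ i, NonUnitalRing (R i)] [∀ i, Fintype (R i)]
    (hnc : ∀ i, ∃ x y : R i, x * y ≠ y * x)
    (hz : ∀ i, Set.center (R i) = {0}) :
    (commutingGraph (∀ i, R i)).dominationNumber =
      ⨅ i, (commutingGraph (R i)).dominationNumber :=
  stmt_4_general t ht R hnc

end
end

section
/- Let R be a finite non-commutative ring of odd order n with Z(R) = {0}. Then γ_s(Γ(R)) = n - 1 if and only if Γ(R) is the disjoint union of (n-1)/2 copies of P₂, i.e. every vertex of Γ(R) has degree exactly 1. -/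
/-!
Negation maps each vertex `x` of `Γ(R)` to a neighbour `-x`; it is a vertex different from `x`
because `R` has odd order, so every degree is at least `1`. It also preserves closed
neighbourhoods, whence a vertex of degree at least `2` only has neighbours of degree at least `2`
(`v` and `-w` are distinct neighbours of any neighbour `w ≠ -v` of `v`). If every degree is `1`,
every closed neighbourhood has two vertices, so a signed dominating function must be constantly
`1` and `γ_s = |R \ Z(R)| = n - 1`. Otherwise, changing the sign at one vertex of degree at least
`2` gives a signed dominating function of weight `n - 3`.
-/

open scoped Classical

noncomputable section

namespace Finset

theorem eq_one_of_one_le_sum_of_card_le_two {V : Type*} {S : Finset V} {g : V → ℤ}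
    (hg : ∀ u, g u = 1 ∨ g u = -1) (hS : S.card ≤ 2) (hsum : 1 ≤ ∑ u ∈ S, g u) {b : V}
    (hb : b ∈ S) : g b = 1 := by
  have hrest : ∑ u ∈ S.erase b, g u ≤ 1 :=
    calc ∑ u ∈ S.erase b, g u ≤ ∑ _u ∈ S.erase b, (1 : ℤ) :=
          sum_le_sum fun u _ => by rcases hg u with h | h <;> simp [h]
      _ ≤ 1 := by
        simp only [sum_const, card_erase_of_mem hb, nsmul_eq_mul, mul_one]; omega
  rw [← sum_erase_add S g hb] at hsum
  rcases hg b with h | h <;> omega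

theorem sum_ite_eq_neg_one {V : Type*} (S : Finset V) (v : V) :
    ∑ u ∈ S, (if u = v then -1 else 1 : ℤ) = S.card - if v ∈ S then 2 else 0 := by
  by_cases hv : v ∈ S
  · rw [← sum_erase_add S _ hv,
      sum_congr rfl fun u hu => if_neg (ne_of_mem_erase hu)]
    simp [card_erase_of_mem hv, hv, Nat.cast_pred (card_pos.mpr ⟨v, hv⟩)]
    ring
  · rw [sum_congr rfl fun u hu => if_neg fun (h : u = v) => hv (h ▸ hu)]
    simp [hv]

end Finset

namespace SimpleGraph

variable {V : Type*} [Fintype V] (G : SimpleGraph V)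

def closedNeighborFinset (v : V) : Finset V :=
  Finset.univ.filter (fun u => G.Adj v u ∨ u = v)

theorem closedNeighborFinset_eq_insert (v : V) :
    G.closedNeighborFinset v = insert v (G.neighborFinset v) := by
  ext u
  simp only [closedNeighborFinset, Finset.mem_filter, Finset.mem_univ, true_and,
    Finset.mem_insert, mem_neighborFinset]
  tauto

theorem card_closedNeighborFinset (v : V) :
    (G.closedNeighborFinset v).card = G.degree v + 1 := by
  rw [closedNeighborFinset_eq_insert, Finset.card_insert_of_notMem (by simp),
    card_neighborFinset_eq_degree]

theorem mem_closedNeighborFinset_self (v : V) : v ∈ G.closedNeighborFinset v := by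
  simp [closedNeighborFinset]

theorem signedDominationNumber_le_sum {f : V → ℤ} (hf : ∀ v, f v = 1 ∨ f v = -1)
    (hdom : ∀ v, 1 ≤ ∑ u ∈ G.closedNeighborFinset v, f u) :
    G.signedDominationNumber ≤ ∑ v, f v := by
  refine csInf_le ⟨-(Fintype.card V : ℤ), ?_⟩ ⟨f, hf, hdom, rfl⟩
  rintro w ⟨g, hg, -, rfl⟩
  calc -(Fintype.card V : ℤ) = ∑ _v : V, (-1 : ℤ) := by simp
    _ ≤ ∑ v, g v := Finset.sum_le_sum fun v _ => by rcases hg v with h | h <;> simp [h]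

theorem signedDominationNumber_eq_card_of_degree_le_one (h : ∀ v, G.degree v ≤ 1) :
    G.signedDominationNumber = Fintype.card V := by
  have hcard : ∀ v, (G.closedNeighborFinset v).card ≤ 2 := fun v => by
    rw [card_closedNeighborFinset]; exact Nat.succ_le_succ (h v)
  refine IsLeast.csInf_eq ⟨⟨fun _ => 1, fun _ => .inl rfl, fun v => ?_, by simp⟩, ?_⟩
  · show 1 ≤ ∑ u ∈ G.closedNeighborFinset v, (1 : ℤ)
    simpa using Finset.card_pos.mpr ⟨v, G.mem_closedNeighborFinset_self v⟩
  · rintro w ⟨g, hg, hdom, rfl⟩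
    have hg1 : ∀ v, g v = 1 := fun v =>
      Finset.eq_one_of_one_le_sum_of_card_le_two hg (hcard v) (hdom v)
        (G.mem_closedNeighborFinset_self v)
    simp [hg1]

/-- Witness: weight `v` by `-1` and every other vertex by `1`; each closed neighbourhood
containing `v` has at least three vertices, so still has positive weight. -/
theorem signedDominationNumber_le_card_sub_two {v : V} (hv : 2 ≤ G.degree v)
    (hnbr : ∀ w, G.Adj v w → 2 ≤ G.degree w) :
    G.signedDominationNumber ≤ Fintype.card V - 2 := by
  have hsum := Finset.sum_ite_eq_neg_one (V := V)
  refine (G.signedDominationNumber_le_sum (f := fun u => if u = v then -1 else 1)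
    (fun u => by by_cases hu : u = v <;> simp [hu]) fun b => ?_).trans ?_
  · rw [hsum, card_closedNeighborFinset]
    split_ifs with hvb
    · have : 2 ≤ G.degree b := by
        simp only [closedNeighborFinset, Finset.mem_filter, Finset.mem_univ, true_and] at hvb
        rcases hvb with hbv | rfl
        · exact hnbr b hbv.symm
        · exact hv
      omega
    · omega
  · rw [hsum, if_pos (Finset.mem_univ v), Finset.card_univ]

theorem signedDominationNumber_eq_card_iff (hpos : ∀ v, 1 ≤ G.degree v)
    (hnbr : ∀ v w, G.Adj v w → 2 ≤ G.degree v → 2 ≤ G.degree w) :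
    G.signedDominationNumber = Fintype.card V ↔ ∀ v, G.degree v = 1 := by
  refine ⟨fun h v => ?_, fun h => G.signedDominationNumber_eq_card_of_degree_le_one
    fun v => (h v).le⟩
  by_contra hv
  have h2 : 2 ≤ G.degree v := by have := hpos v; omega
  have := G.signedDominationNumber_le_card_sub_two h2 (hnbr v · · h2)
  omega

end SimpleGraph

namespace commutingGraph

variable {R : Type*} [NonUnitalRing R]

theorem adj_iff {x y : {x : R // x ∉ Set.center R}} :
    (commutingGraph R).Adj x y ↔ x ≠ y ∧ Commute (x : R) y :=
  Iff.rfl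

def negVertex (x : {x : R // x ∉ Set.center R}) : {x : R // x ∉ Set.center R} :=
  ⟨-x, fun h => x.2 (by simpa using Set.neg_mem_center h)⟩

@[simp]
theorem coe_negVertex (x : {x : R // x ∉ Set.center R}) : (negVertex x : R) = -x :=
  rfl

theorem negVertex_negVertex (x : {x : R // x ∉ Set.center R}) : negVertex (negVertex x) = x :=
  Subtype.ext (neg_neg _)

variable [Fintype R]

theorem closedNeighborFinset_eq (v : {x : R // x ∉ Set.center R}) :
    (commutingGraph R).closedNeighborFinset v =
      Finset.univ.filter fun u : {x : R // x ∉ Set.center R} => Commute (v : R) u := by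
  ext u
  simp only [SimpleGraph.closedNeighborFinset, adj_iff, Finset.mem_filter, Finset.mem_univ,
    true_and]
  constructor
  · rintro (⟨-, h⟩ | rfl)
    exacts [h, Commute.refl _]
  · intro h
    by_cases hu : u = v
    exacts [.inr hu, .inl ⟨Ne.symm hu, h⟩]

theorem degree_negVertex (v : {x : R // x ∉ Set.center R}) :
    (commutingGraph R).degree (negVertex v) = (commutingGraph R).degree v := by
  have h := congrArg Finset.card (closedNeighborFinset_eq (negVertex v))
  simp only [coe_negVertex, Commute.neg_left_iff, ← closedNeighborFinset_eq,
    SimpleGraph.card_closedNeighborFinset] at h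
  omega

/-- Since `R` has odd order, `x = -x` forces `x = 0`, which is central. -/
theorem adj_negVertex (hodd : Odd (Fintype.card R)) (v : {x : R // x ∉ Set.center R}) :
    (commutingGraph R).Adj v (negVertex v) := by
  refine ⟨fun h => v.2 ?_, (Commute.refl (v : R)).neg_right⟩
  have hcop : (Nat.card R).Coprime 2 := by
    rwa [Nat.card_eq_fintype_card, Nat.coprime_two_right]
  have hneg : (v : R) = -v := congrArg Subtype.val h
  have : (v : R) = 0 := hcop.nsmul_right_bijective.injective <|
    calc 2 • (v : R) = v + -v := by rw [two_nsmul, ← hneg]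
      _ = 2 • 0 := by rw [add_neg_cancel, smul_zero]
  exact this ▸ Set.zero_mem_center

theorem one_le_degree (hodd : Odd (Fintype.card R)) (v : {x : R // x ∉ Set.center R}) :
    1 ≤ (commutingGraph R).degree v := by
  rw [← SimpleGraph.card_neighborFinset_eq_degree]
  exact Finset.card_pos.mpr ⟨negVertex v, by simpa using adj_negVertex hodd v⟩

theorem two_le_degree_of_adj (hodd : Odd (Fintype.card R)) {v w : {x : R // x ∉ Set.center R}}
    (hvw : (commutingGraph R).Adj v w) (hv : 2 ≤ (commutingGraph R).degree v) :
    2 ≤ (commutingGraph R).degree w := by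
  by_cases hw : w = negVertex v
  · rwa [hw, degree_negVertex]
  -- otherwise `v` and `-w` are two distinct neighbours of `w`
  rw [← SimpleGraph.card_neighborFinset_eq_degree]
  refine Finset.one_lt_card.mpr ⟨v, by simpa using hvw.symm, negVertex w,
    by simpa using adj_negVertex hodd w, fun h => hw ?_⟩
  rw [h, negVertex_negVertex]

end commutingGraph

theorem card_notMem_center_of_center_eq_zero {R : Type*} [NonUnitalRing R] [Fintype R]
    (hz : Set.center R = {0}) :
    Fintype.card {x : R // x ∉ Set.center R} = Fintype.card R - 1 := by
  simp [hz, Fintype.card_subtype_compl]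

theorem stmt_6_general (R : Type*) [NonUnitalRing R] [Fintype R] (n : ℕ)
    (hcard : Fintype.card R = n) (hn : Odd n)
    (hz : Set.center R = {0}) :
    (commutingGraph R).signedDominationNumber = (n : ℤ) - 1 ↔
      ∀ v, (commutingGraph R).degree v = 1 := by
  have hodd : Odd (Fintype.card R) := hcard ▸ hn
  have hV : (Fintype.card {x : R // x ∉ Set.center R} : ℤ) = n - 1 := by
    rw [card_notMem_center_of_center_eq_zero hz, hcard, Nat.cast_pred hn.pos]
  rw [← hV]
  exact (commutingGraph R).signedDominationNumber_eq_card_iff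
    (commutingGraph.one_le_degree hodd) fun _ _ => commutingGraph.two_le_degree_of_adj hodd

/-- Theorem D(ii): for odd `n`, `γₛ(Γ(R)) = n - 1` iff `Γ(R)` is a disjoint union of
`(n-1)/2` copies of `P₂`, i.e. every vertex has degree exactly `1`. -/
theorem stmt_6 (R : Type*) [NonUnitalRing R] [Fintype R] (n : ℕ)
    (hcard : Fintype.card R = n) (hn : Odd n)
    (hnc : ∃ x y : R, x * y ≠ y * x)
    (hz : Set.center R = {0}) :
    (commutingGraph R).signedDominationNumber = (n : ℤ) - 1 ↔
      ∀ v, (commutingGraph R).degree v = 1 :=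
  stmt_6_general R n hcard hn hz

end
end

section
/- Let R be a finite non-commutative ring with Z(R) = {0}. Then γ(Γ(R)) ≥ 3. -/
open scoped Classical

noncomputable section

/-! A dominating set `D` of `Γ(R)` makes every element of `R` commute with some `u ∈ D`: a
non-central one through adjacency (or by lying in `D`), a central one trivially. So `R` is the
union of the additive subgroups `C(u)`, `u ∈ D`. If `|D| ≤ 2`, this is a union of at most two
subgroups, so one of them is all of `R`, and the corresponding `u ∈ D` is central, which a vertex
of `Γ(R)` is not. -/

theorem Finset.exists_subset_pair_of_card_le_two {α : Type*} [DecidableEq α] {s : Finset α}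
    {a : α} (ha : a ∈ s) (hs : s.card ≤ 2) : ∃ b, s ⊆ {a, b} := by
  have herase : (s.erase a).card ≤ 1 := by rw [Finset.card_erase_of_mem ha]; omega
  have : Nonempty α := ⟨a⟩
  obtain ⟨b, hb⟩ := Finset.card_le_one_iff_subset_singleton.mp herase
  refine ⟨b, fun x hx => ?_⟩
  by_cases hxa : x = a
  · exact hxa ▸ Finset.mem_insert_self a {b}
  · exact Finset.mem_insert_of_mem (hb (Finset.mem_erase.mpr ⟨hxa, hx⟩))

theorem SimpleGraph.exists_isDominatingSet_card_eq_dominationNumber_s9 {V : Type*} [Fintype V]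
    (G : SimpleGraph V) : ∃ D : Finset V, G.IsDominatingSet D ∧ D.card = G.dominationNumber := by
  have hne : {n | ∃ D : Finset V, G.IsDominatingSet D ∧ D.card = n}.Nonempty :=
    ⟨_, Finset.univ, fun v hv => absurd (Finset.mem_univ v) hv, rfl⟩
  exact Nat.sInf_mem hne

section CommutingGraph

variable {R : Type*} [NonUnitalRing R]

theorem mem_center_or_mem_center_of_forall_commute {u v : R}
    (h : ∀ a : R, Commute u a ∨ Commute v a) : u ∈ Set.center R ∨ v ∈ Set.center R := by
  have hcover : ((⊤ : NonUnitalSubring R) : Set R) ⊆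
      NonUnitalSubring.centralizer {u} ∪ NonUnitalSubring.centralizer {v} := fun a _ => by
    simpa [Set.mem_centralizer_iff, Commute, SemiconjBy] using h a
  have central_of_top_le {w : R} (hw : ⊤ ≤ NonUnitalSubring.centralizer {w}) :
      w ∈ Set.center R :=
    Set.singleton_subset_iff.mp
      (NonUnitalSubring.centralizer_eq_top_iff_subset.mp (top_le_iff.mp hw))
  exact (AddSubgroupClass.subset_union.mp hcover).imp central_of_top_le central_of_top_le

theorem commutingGraph.exists_commute_of_isDominatingSet
    {D : Finset {x : R // x ∉ Set.center R}} (hD : (commutingGraph R).IsDominatingSet D)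
    {a : R} (ha : a ∉ Set.center R) : ∃ u ∈ D, Commute (u : R) a := by
  by_cases haD : ⟨a, ha⟩ ∈ D
  · exact ⟨_, haD, Commute.refl a⟩
  · obtain ⟨u, hu, -, hcomm⟩ := hD _ haD
    exact ⟨u, hu, hcomm⟩

theorem commutingGraph.three_le_card_of_isDominatingSet (hnc : ∃ x y : R, x * y ≠ y * x)
    {D : Finset {x : R // x ∉ Set.center R}} (hD : (commutingGraph R).IsDominatingSet D) :
    3 ≤ D.card := by
  by_contra! hcard
  obtain ⟨x, y, hxy⟩ := hnc
  have hx : x ∉ Set.center R := fun hx => hxy (Semigroup.mem_center_iff.mp hx y).symm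
  obtain ⟨u, hu, -⟩ := exists_commute_of_isDominatingSet hD hx
  obtain ⟨v, hDuv⟩ := Finset.exists_subset_pair_of_card_le_two hu (by omega)
  have hcover (a : R) : Commute (u : R) a ∨ Commute (v : R) a := by
    by_cases ha : a ∈ Set.center R
    · exact Or.inl (Semigroup.mem_center_iff.mp ha u)
    · obtain ⟨w, hw, hcomm⟩ := exists_commute_of_isDominatingSet hD ha
      rcases Finset.mem_insert.mp (hDuv hw) with rfl | hw
      · exact Or.inl hcomm
      · exact Or.inr (Finset.mem_singleton.mp hw ▸ hcomm)
  exact (mem_center_or_mem_center_of_forall_commute hcover).elim u.2 v.2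

end CommutingGraph

theorem stmt_9_general (R : Type*) [NonUnitalRing R] [Fintype R]
    (hnc : ∃ x y : R, x * y ≠ y * x) :
    3 ≤ (commutingGraph R).dominationNumber := by
  obtain ⟨D, hD, hcard⟩ := (commutingGraph R).exists_isDominatingSet_card_eq_dominationNumber_s9
  exact hcard ▸ commutingGraph.three_le_card_of_isDominatingSet hnc hD

/-- `γ(Γ(R)) ≥ 3` for a finite non-commutative ring with trivial center. -/
theorem stmt_9 (R : Type*) [NonUnitalRing R] [Fintype R]
    (hnc : ∃ x y : R, x * y ≠ y * x)
    (hz : Set.center R = {0}) :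
    3 ≤ (commutingGraph R).dominationNumber :=
  stmt_9_general R hnc

end
end
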